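/- For k₁, k₂ ∈ ℤ and p, q ∈ ℂ[X] define the polynomial R(k₁,p; k₂,q) = (X+k₂)·p(X+k₂)·q(X) − (X+k₁)·q(X+k₁)·p(X), so that ⁅E(k₁, X·p), E(k₂, X·q)⁆ = E(k₁+k₂, X·R(k₁,p; k₂,q)). Then for all k₁, k₂ ∈ ℤ and p, q ∈ ℂ[X]: R(k₁, p(−X−k₁); k₂, q(−X−k₂)) = R(k₁,p; k₂,q) composed with −X−(k₁+k₂). (This expresses that the map θ₁ sending the differential operator t^k p(D)·D to t^k p(−D−k)·D preserves Lie brackets, and it is evidently an involution.) -/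
import Mathlib


open Polynomial

/-- The endomorphism of `ℂ[t,t⁻¹]` (modeled as `ℤ →₀ ℂ`) sending `tⁿ` to `f(n)·t^{n+k}`;
it represents the differential operator `t^k·f(D)` with `D = t·d/dt`. -/
noncomputable def E (k : ℤ) (f : Polynomial ℂ) : Module.End ℂ (ℤ →₀ ℂ) :=
  Finsupp.lsum ℂ fun n : ℤ => f.eval (n : ℂ) • Finsupp.lsingle (n + k)

/-- `R(k₁,p; k₂,q) = (X+k₂)·p(X+k₂)·q(X) − (X+k₁)·q(X+k₁)·p(X)`. -/
noncomputable def R (k₁ : ℤ) (p : Polynomial ℂ) (k₂ : ℤ) (q : Polynomial ℂ) : Polynomial ℂ :=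
  (X + C (k₂ : ℂ)) * p.comp (X + C (k₂ : ℂ)) * q -
    (X + C (k₁ : ℂ)) * q.comp (X + C (k₁ : ℂ)) * p

lemma E_single (k : ℤ) (f : Polynomial ℂ) (n : ℤ) (c : ℂ) :
    E k f (Finsupp.single n c) = (f.eval (n : ℂ) * c) • Finsupp.single (n + k) 1 := by
  rw [E, Finsupp.lsum_single, LinearMap.smul_apply, Finsupp.lsingle_apply,
    Finsupp.smul_single, Finsupp.smul_single, smul_eq_mul, smul_eq_mul, mul_one]


/-- `⁅E(k₁, X·p), E(k₂, X·q)⁆ = E(k₁+k₂, X·R(k₁,p; k₂,q))`, and the map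
`θ₁ : t^k p(D)·D ↦ t^k p(−D−k)·D` preserves Lie brackets:
`R(k₁, p(−X−k₁); k₂, q(−X−k₂)) = R(k₁,p; k₂,q) ∘ (−X−(k₁+k₂))`. -/
theorem theta1_preserves_bracket :
    (∀ (k₁ k₂ : ℤ) (p q : Polynomial ℂ),
      ⁅E k₁ (X * p), E k₂ (X * q)⁆ = E (k₁ + k₂) (X * R k₁ p k₂ q)) ∧
    (∀ (k₁ k₂ : ℤ) (p q : Polynomial ℂ),
      R k₁ (p.comp (-X - C (k₁ : ℂ))) k₂ (q.comp (-X - C (k₂ : ℂ))) =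
        (R k₁ p k₂ q).comp (-X - C ((k₁ + k₂ : ℤ) : ℂ))) := by
  constructor
  · intro k₁ k₂ p q
    refine Finsupp.lhom_ext fun n c => ?_
    simp only [LieRing.of_associative_ring_bracket]
    simp only [LinearMap.sub_apply, Module.End.mul_apply, E_single, map_smul,
      LinearMap.smul_apply]
    simp only [E_single, mul_one, smul_smul, R]
    have : n + k₂ + k₁ = n + (k₁ + k₂) := by ring
    rw [this]
    have : n + k₁ + k₂ = n + (k₁ + k₂) := by ring
    rw [this]
    rw [← sub_smul]
    congr 1
    push_cast
    simp [eval_comp]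
    ring
  · intro k₁ k₂ p q
    apply Polynomial.funext
    intro x
    simp only [R, eval_comp, eval_sub, eval_mul, eval_add, eval_X, eval_C, eval_neg]
    push_cast
    ring
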